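/- Let C be an origin-symmetric convex body in ℝⁿ with |C| = 1 and p ≥ n. Then there is an absolute constant c₀ > 0 (independent of n, p, C) such that c₀·C ⊆ Z_p(C) ⊆ C. -/

import Mathlib

open MeasureTheory Set Metric
open scoped ENNReal RealInnerProductSpace NNReal Pointwise

noncomputable section

abbrev E (n : ℕ) := EuclideanSpace ℝ (Fin n)

/-- A star body: compact, origin in the interior, star-shaped with respect to the
origin, and with continuous Minkowski functional (gauge). -/
def IsStarBody {n : ℕ} (K : Set (E n)) : Prop :=
  IsCompact K ∧ 0 ∈ interior K ∧
    (∀ x ∈ K, ∀ t : ℝ, 0 ≤ t → t ≤ 1 → t • x ∈ K) ∧ Continuous (gauge K)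

/-- An origin-symmetric convex body. -/
def IsSymmetricConvexBody {n : ℕ} (K : Set (E n)) : Prop :=
  IsCompact K ∧ Convex ℝ K ∧ 0 ∈ interior K ∧ ∀ x ∈ K, -x ∈ K


/-- The body Z_p(C), defined via its support function
h_{Z_p(C)}(th) = (∫_C |<x,th>|^p dx)^{1/p}. -/
def Zp (n : ℕ) (p : ℝ) (C : Set (E n)) : Set (E n) :=
  {y | ∀ θ : E n, ⟪y, θ⟫ ≤ (∫ x in C, |⟪x, θ⟫| ^ p) ^ (1 / p)}

/-- The polar set of K with respect to the standard inner product. -/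
def polarSet {n : ℕ} (K : Set (E n)) : Set (E n) :=
  {x | ∀ y ∈ K, ⟪x, y⟫ ≤ 1}

/-!
For the right inclusion, separate a point `y ∉ C` from `C` by a hyperplane `⟪·, θ⟫ = u`;
by symmetry `|⟪x, θ⟫| < u` on `C`, so `h_{Z_p(C)}(θ) ≤ u |C|^{1/p} < ⟪y, θ⟫`.

For the left inclusion, let `y ∈ C` and `h = ⟪y, θ⟫ > 0`. By convexity, the image of the half
`C ∩ {⟪x, θ⟫ ≥ 0}` under the homothety of centre `y` and ratio `1/2` lies in
`C ∩ {⟪x, θ⟫ ≥ h/2}`, and by symmetry that half has volume at least `|C|/2`; so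
`∫_C |⟪x, θ⟫|^p ≥ (h/2)^p 2^{-(n+1)} ≥ (h/8)^p` once `p ≥ n ≥ 1`.
-/

section InnerProductSpace

variable {F : Type*} [NormedAddCommGroup F] [InnerProductSpace ℝ F]

theorem homothety_image_inter_inner_nonneg_subset {C : Set F} (hconv : Convex ℝ C) {y : F}
    (hy : y ∈ C) (θ : F) :
    AffineMap.homothety y (1 / 2 : ℝ) '' (C ∩ {x | 0 ≤ ⟪x, θ⟫}) ⊆
      C ∩ {x | ⟪y, θ⟫ / 2 ≤ ⟪x, θ⟫} := by
  rintro _ ⟨x, ⟨hx, hxθ⟩, rfl⟩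
  refine ⟨?_, ?_⟩
  · rw [AffineMap.homothety_eq_lineMap]
    exact hconv.lineMap_mem hy hx ⟨by norm_num, by norm_num⟩
  · simp only [AffineMap.homothety_apply, vsub_eq_sub, vadd_eq_add, mem_ofPred_eq,
      inner_add_left, inner_sub_left, real_inner_smul_left] at hxθ ⊢
    linarith

theorem exists_inner_lt_of_notMem [CompleteSpace F] {C : Set F} (hconv : Convex ℝ C)
    (hclosed : IsClosed C) {y : F} (hy : y ∉ C) :
    ∃ θ : F, ∃ u : ℝ, (∀ x ∈ C, ⟪x, θ⟫ < u) ∧ u < ⟪y, θ⟫ := by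
  obtain ⟨f, u, hC, hy⟩ := geometric_hahn_banach_closed_point hconv hclosed hy
  refine ⟨(InnerProductSpace.toDual ℝ F).symm f, u, fun x hx => ?_, ?_⟩
  · rw [real_inner_comm, InnerProductSpace.toDual_symm_apply]
    exact hC x hx
  · rwa [real_inner_comm, InnerProductSpace.toDual_symm_apply]

variable [MeasurableSpace F] [BorelSpace F] (μ : Measure F)

theorem rpow_mul_measureReal_le_setIntegral_abs_inner_rpow [IsFiniteMeasureOnCompacts μ]
    {C : Set F} (hC : IsCompact C) (θ : F) {p t : ℝ} (hp : 0 ≤ p) (ht : 0 ≤ t) :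
    t ^ p * μ.real (C ∩ {x | t ≤ ⟪x, θ⟫}) ≤ ∫ x in C, |⟪x, θ⟫| ^ p ∂μ := by
  have hcont : Continuous fun x : F => |⟪x, θ⟫| ^ p := by fun_prop (disch := exact Or.inr hp)
  have hmarkov := mul_meas_ge_le_integral_of_nonneg (μ := μ.restrict C)
    (Filter.Eventually.of_forall fun x => by positivity)
    (hcont.continuousOn.integrableOn_compact hC) (t ^ p)
  refine le_trans (mul_le_mul_of_nonneg_left ?_ (by positivity)) hmarkov
  rw [measureReal_restrict_apply' hC.measurableSet]
  refine measureReal_mono (fun x ⟨hxC, hx⟩ => ⟨?_, hxC⟩)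
    (measure_ne_top_of_subset inter_subset_right hC.measure_lt_top.ne)
  exact Real.rpow_le_rpow ht (hx.trans (le_abs_self _)) hp

variable [FiniteDimensional ℝ F] [μ.IsAddHaarMeasure]

theorem measure_le_two_mul_measure_inter_inner_nonneg {C : Set F} (hsym : ∀ x ∈ C, -x ∈ C)
    (θ : F) : μ C ≤ 2 * μ (C ∩ {x | 0 ≤ ⟪x, θ⟫}) := by
  set A := C ∩ {x | 0 ≤ ⟪x, θ⟫}
  have hcover : C ⊆ A ∪ -A := by
    intro x hx
    rcases le_total 0 ⟪x, θ⟫ with h | h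
    · exact Or.inl ⟨hx, h⟩
    · exact Or.inr ⟨hsym x hx, by simpa [inner_neg_left] using h⟩
  calc μ C ≤ μ (A ∪ -A) := measure_mono hcover
    _ ≤ μ A + μ (-A) := measure_union_le _ _
    _ = 2 * μ A := by rw [Measure.measure_neg, two_mul]

theorem measure_le_two_pow_mul_measure_inter_inner_ge {C : Set F} (hconv : Convex ℝ C)
    (hsym : ∀ x ∈ C, -x ∈ C) {y : F} (hy : y ∈ C) (θ : F) :
    μ C ≤ 2 ^ (Module.finrank ℝ F + 1) * μ (C ∩ {x | ⟪y, θ⟫ / 2 ≤ ⟪x, θ⟫}) := by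
  set d := Module.finrank ℝ F
  set A := C ∩ {x | 0 ≤ ⟪x, θ⟫}
  have hscale : (2 : ℝ≥0∞) ^ d * ENNReal.ofReal |(1 / 2 : ℝ) ^ d| = 1 := by
    rw [abs_of_nonneg (by positivity), ENNReal.ofReal_pow (by norm_num), one_div,
      ENNReal.ofReal_inv_of_pos two_pos, ENNReal.ofReal_ofNat, ← mul_pow,
      ENNReal.mul_inv_cancel two_ne_zero ENNReal.ofNat_ne_top, one_pow]
  calc μ C ≤ 2 * μ A := measure_le_two_mul_measure_inter_inner_nonneg μ hsym θ
    _ = 2 ^ (d + 1) * μ (AffineMap.homothety y (1 / 2 : ℝ) '' A) := by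
      rw [Measure.addHaar_image_homothety, ← mul_assoc, pow_succ, mul_comm _ 2, mul_assoc 2,
        hscale, mul_one]
    _ ≤ 2 ^ (d + 1) * μ (C ∩ {x | ⟪y, θ⟫ / 2 ≤ ⟪x, θ⟫}) := by
      gcongr
      exact homothety_image_inter_inner_nonneg_subset hconv hy θ

theorem inner_div_two_rpow_mul_measureReal_le_setIntegral {C : Set F} (hC : IsCompact C)
    (hconv : Convex ℝ C) (hsym : ∀ x ∈ C, -x ∈ C) {y : F} (hy : y ∈ C) (θ : F) {p : ℝ}
    (hp : 0 ≤ p) (hyθ : 0 ≤ ⟪y, θ⟫) :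
    (⟪y, θ⟫ / 2) ^ p * μ.real C ≤
      2 ^ (Module.finrank ℝ F + 1) * ∫ x in C, |⟪x, θ⟫| ^ p ∂μ := by
  set T := C ∩ {x | ⟪y, θ⟫ / 2 ≤ ⟪x, θ⟫}
  have hT : μ.real C ≤ 2 ^ (Module.finrank ℝ F + 1) * μ.real T := by
    have hTfin : μ T ≠ ∞ := measure_ne_top_of_subset inter_subset_left hC.measure_lt_top.ne
    have := ENNReal.toReal_mono (by finiteness)
      (measure_le_two_pow_mul_measure_inter_inner_ge μ hconv hsym hy θ)
    simpa [measureReal_def] using this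
  calc (⟪y, θ⟫ / 2) ^ p * μ.real C
      ≤ (⟪y, θ⟫ / 2) ^ p * (2 ^ (Module.finrank ℝ F + 1) * μ.real T) := by gcongr
    _ = 2 ^ (Module.finrank ℝ F + 1) * ((⟪y, θ⟫ / 2) ^ p * μ.real T) := by ring
    _ ≤ 2 ^ (Module.finrank ℝ F + 1) * ∫ x in C, |⟪x, θ⟫| ^ p ∂μ := by
      gcongr
      exact rpow_mul_measureReal_le_setIntegral_abs_inner_rpow μ hC θ hp (by positivity)

end InnerProductSpace

theorem Zp_subset {n : ℕ} {p : ℝ} (hp : 0 < p) {C : Set (E n)} (hC : IsSymmetricConvexBody C)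
    (hvol : volume C ≤ 1) : Zp n p C ⊆ C := by
  obtain ⟨hcomp, hconv, h0, hsym⟩ := hC
  intro y hy
  by_contra hyC
  obtain ⟨θ, u, hCu, huy⟩ := exists_inner_lt_of_notMem hconv hcomp.isClosed hyC
  have habs : ∀ x ∈ C, |⟪x, θ⟫| ≤ u := fun x hx => abs_le.2
    ⟨by linarith [inner_neg_left (𝕜 := ℝ) x θ, hCu (-x) (hsym x hx)], (hCu x hx).le⟩
  have hu : 0 ≤ u := (abs_nonneg _).trans (habs 0 (interior_subset h0))
  have hI : ∫ x in C, |⟪x, θ⟫| ^ p ≤ u ^ p :=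
    calc ∫ x in C, |⟪x, θ⟫| ^ p ≤ ‖∫ x in C, |⟪x, θ⟫| ^ p‖ := Real.le_norm_self _
      _ ≤ u ^ p * volume.real C := by
        refine norm_setIntegral_le_of_norm_le_const (hvol.trans_lt ENNReal.one_lt_top)
          fun x hx => ?_
        rw [Real.norm_of_nonneg (by positivity)]
        exact Real.rpow_le_rpow (abs_nonneg _) (habs x hx) hp.le
      _ ≤ u ^ p := mul_le_of_le_one_right (by positivity)
        (ENNReal.toReal_le_of_le_ofReal zero_le_one (by simpa using hvol))
  have hle : (∫ x in C, |⟪x, θ⟫| ^ p) ^ (1 / p) ≤ u := by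
    rwa [one_div, Real.rpow_inv_le_iff_of_pos (integral_nonneg fun x => by positivity) hu hp]
  linarith [hy θ]

theorem smul_subset_Zp {n : ℕ} (hn : 0 < n) {p : ℝ} (hp : (n : ℝ) ≤ p) {C : Set (E n)}
    (hC : IsSymmetricConvexBody C) (hvol : volume C = 1) : (1 / 8 : ℝ) • C ⊆ Zp n p C := by
  obtain ⟨hcomp, hconv, -, hsym⟩ := hC
  rintro _ ⟨y, hy, rfl⟩ θ
  have hp0 : 0 < p := lt_of_lt_of_le (Nat.cast_pos.2 hn) hp
  set I := ∫ x in C, |⟪x, θ⟫| ^ p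
  have hI : 0 ≤ I := integral_nonneg fun x => by positivity
  rw [real_inner_smul_left]
  rcases le_or_gt ⟪y, θ⟫ 0 with hyθ | hyθ
  · exact (by linarith : 1 / 8 * ⟪y, θ⟫ ≤ 0).trans (Real.rpow_nonneg hI _)
  rw [one_div p, Real.le_rpow_inv_iff_of_pos (by positivity) hI hp0]
  have hkey := inner_div_two_rpow_mul_measureReal_le_setIntegral volume hcomp hconv hsym hy θ
    hp0.le hyθ.le
  rw [measureReal_def, hvol, ENNReal.toReal_one, mul_one, finrank_euclideanSpace_fin] at hkey
  have hpow : (2 : ℝ) ^ (n + 1) ≤ 4 ^ p :=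
    calc (2 : ℝ) ^ (n + 1) ≤ 2 ^ (2 * n) := pow_le_pow_right₀ one_le_two (by omega)
      _ = (4 : ℝ) ^ (n : ℝ) := by rw [pow_mul, Real.rpow_natCast]; norm_num
      _ ≤ 4 ^ p := Real.rpow_le_rpow_of_exponent_le (by norm_num) hp
  calc (1 / 8 * ⟪y, θ⟫) ^ p = (⟪y, θ⟫ / 2) ^ p / 4 ^ p := by
        rw [← Real.div_rpow (by positivity) (by norm_num)]; ring_nf
    _ ≤ 2 ^ (n + 1) * I / 4 ^ p := by gcongr
    _ ≤ I := by
      rw [div_le_iff₀ (by positivity), mul_comm I]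
      gcongr

/-- For p ≥ n, Z_p(C) is isomorphic to C with an absolute constant. -/
theorem Zp_isomorphic_self :
    ∃ c₀ : ℝ, 0 < c₀ ∧ ∀ (n : ℕ), 0 < n → ∀ p : ℝ, (n : ℝ) ≤ p →
      ∀ C : Set (E n), IsSymmetricConvexBody C → volume C = 1 →
        c₀ • C ⊆ Zp n p C ∧ Zp n p C ⊆ C :=
  ⟨1 / 8, by norm_num, fun n hn p hp C hC hvol =>
    ⟨smul_subset_Zp hn hp hC hvol,
      Zp_subset (lt_of_lt_of_le (Nat.cast_pos.2 hn) hp) hC hvol.le⟩⟩
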